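/- Let A ∈ ℝ^{m×n} with m ≤ n, let H ∈ ℝ^{n×n} be symmetric positive definite, and let R_d ∈ ℝ^{m×m} be symmetric positive definite. Then every strictly positive eigenvalue μ of the symmetric matrix M = [[−H, Aᵀ],[A, R_d]] satisfies (1/2) ( (λ_min(R_d) − λ_max(H)) + [ (λ_max(H) + λ_min(R_d))² + 4 σ_min(A)² ]^{1/2} ) ≤ μ ≤ (1/2) ( λ_max(R_d) + [ λ_max(R_d)² + 4 σ_max(A)² ]^{1/2} ). -/

import Mathlib

/-!
Write an eigenvector of `M` as `(u, v)`. The first block row says `Aᵀ v = (μ + H) u`, and since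
`H ≥ 0` this forces `v ≠ 0` when `μ > 0`. Pairing the second block row with `v` gives
`μ ‖v‖² = ⟪u, (μ + H) u⟫ + ⟪v, R_d v⟫`, while `‖Aᵀ v‖² = ⟪v, A Aᵀ v⟫` lies between
`σ_min(A)² ‖v‖²` and `σ_max(A)² ‖v‖²`. Diagonalising `H` gives
`μ ⟪u, (μ + H) u⟫ ≤ ‖(μ + H) u‖² ≤ (μ + λ_max(H)) ⟪u, (μ + H) u⟫`, and together with the Rayleigh
bounds for `R_d` this yields `μ² ≤ λ_max(R_d) μ + σ_max(A)²` and
`σ_min(A)² ≤ (μ + λ_max(H)) (μ - λ_min(R_d))`. Solving these quadratic inequalities for `μ`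
gives the two bounds.
-/

open Matrix

/-- Spectral norm (largest singular value) of a real matrix. -/
noncomputable def specNorm {m n : ℕ} (A : Matrix (Fin m) (Fin n) ℝ) : ℝ :=
  Real.sqrt (⨆ i, (Matrix.isHermitian_mul_conjTranspose_self A).eigenvalues i)

/-- Smallest singular value of A (for m ≤ n): σ_min(A)² = λ_min(A Aᵀ). -/
noncomputable def sigMin {m n : ℕ} (A : Matrix (Fin m) (Fin n) ℝ) : ℝ :=
  Real.sqrt (⨅ i, (Matrix.isHermitian_mul_conjTranspose_self A).eigenvalues i)

namespace Matrix

variable {m n : Type*} [Fintype m] [Fintype n]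

lemma transpose_mulVec_dotProduct_self (A : Matrix m n ℝ) (v : m → ℝ) :
    (Aᵀ *ᵥ v) ⬝ᵥ (Aᵀ *ᵥ v) = v ⬝ᵥ (A * Aᴴ) *ᵥ v := by
  rw [conjTranspose_eq_transpose_of_trivial, ← mulVec_mulVec, dotProduct_mulVec,
    ← mulVec_transpose, transpose_transpose, dotProduct_comm]

lemma fromBlocks_mulVec_eq_smul {A : Matrix n n ℝ} {B : Matrix n m ℝ} {C : Matrix m n ℝ}
    {D : Matrix m m ℝ} {μ : ℝ} {x : n ⊕ m → ℝ} (h : fromBlocks A B C D *ᵥ x = μ • x) :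
    A *ᵥ (x ∘ Sum.inl) + B *ᵥ (x ∘ Sum.inr) = μ • (x ∘ Sum.inl) ∧
      C *ᵥ (x ∘ Sum.inl) + D *ᵥ (x ∘ Sum.inr) = μ • (x ∘ Sum.inr) := by
  rw [fromBlocks_mulVec] at h
  exact ⟨funext fun i => congrFun h (.inl i), funext fun i => congrFun h (.inr i)⟩

namespace PosSemidef

variable {H : Matrix n n ℝ} {μ : ℝ}

lemma eq_zero_of_neg_mulVec_eq_smul (hH : H.PosSemidef) (hμ : 0 < μ) {u : n → ℝ}
    (h : -H *ᵥ u = μ • u) : u = 0 := by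
  have hHu : u ⬝ᵥ H *ᵥ u = -(μ * (u ⬝ᵥ u)) := by
    rw [← smul_eq_mul, ← dotProduct_smul, ← h, neg_mulVec, dotProduct_neg, neg_neg]
  have hHu_nonneg : 0 ≤ u ⬝ᵥ H *ᵥ u := by
    simpa only [star_trivial] using hH.dotProduct_mulVec_nonneg u
  have huu : u ⬝ᵥ u ≤ 0 := nonpos_of_mul_nonpos_right (by linarith) hμ
  exact dotProduct_self_eq_zero.mp
    (huu.antisymm (by simpa only [star_trivial] using dotProduct_star_self_nonneg u))

lemma mul_dotProduct_smul_add_mulVec_le (hH : H.PosSemidef) (hμ : 0 ≤ μ) (u : n → ℝ) :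
    μ * (u ⬝ᵥ (μ • u + H *ᵥ u)) ≤ (μ • u + H *ᵥ u) ⬝ᵥ (μ • u + H *ᵥ u) := by
  have hHu : 0 ≤ u ⬝ᵥ H *ᵥ u := by
    simpa only [star_trivial] using hH.dotProduct_mulVec_nonneg u
  have hHuHu : 0 ≤ (H *ᵥ u) ⬝ᵥ (H *ᵥ u) := by
    simpa only [star_trivial] using dotProduct_star_self_nonneg (H *ᵥ u)
  simp only [dotProduct_add, add_dotProduct, dotProduct_smul, smul_dotProduct, smul_eq_mul,
    dotProduct_comm (H *ᵥ u) u]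
  nlinarith [mul_nonneg hμ hHu]

end PosSemidef

section Spectral

variable [DecidableEq n] {B H : Matrix n n ℝ} {μ : ℝ}

lemma dotProduct_mulVec_self_of_transpose_mul_eq_one {U : Matrix n n ℝ} (hU : Uᵀ * U = 1)
    (z : n → ℝ) : (U *ᵥ z) ⬝ᵥ (U *ᵥ z) = z ⬝ᵥ z := by
  rw [dotProduct_mulVec, vecMul_mulVec, ← mulVec_transpose, hU, transpose_one, one_mulVec]

lemma IsHermitian.exists_eigencoords (hB : B.IsHermitian) (x : n → ℝ) :
    ∃ y : n → ℝ, x ⬝ᵥ x = ∑ i, y i ^ 2 ∧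
      x ⬝ᵥ B *ᵥ x = ∑ i, hB.eigenvalues i * y i ^ 2 ∧
      (B *ᵥ x) ⬝ᵥ (B *ᵥ x) = ∑ i, hB.eigenvalues i ^ 2 * y i ^ 2 := by
  set U : Matrix n n ℝ := (hB.eigenvectorUnitary : Matrix n n ℝ)
  have hstar : star U = Uᵀ := conjTranspose_eq_transpose_of_trivial U
  have hUtU : Uᵀ * U = 1 := hstar ▸ Unitary.star_mul_self_of_mem hB.eigenvectorUnitary.2
  have hUUt : Uᵀᵀ * Uᵀ = 1 := by
    rw [transpose_transpose, ← hstar]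
    exact Unitary.mul_star_self_of_mem hB.eigenvectorUnitary.2
  have hB' : B = U * diagonal hB.eigenvalues * Uᵀ := by
    have h := hB.spectral_theorem
    rwa [Unitary.conjStarAlgAut_apply, hstar] at h
  have hBx : B *ᵥ x = U *ᵥ (diagonal hB.eigenvalues *ᵥ (Uᵀ *ᵥ x)) := by
    rw [mulVec_mulVec, mulVec_mulVec, ← hB']
  refine ⟨Uᵀ *ᵥ x, ?_, ?_, ?_⟩
  · rw [← dotProduct_mulVec_self_of_transpose_mul_eq_one hUUt x]
    simp only [dotProduct, sq]
  · rw [hBx, dotProduct_mulVec, ← mulVec_transpose]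
    simp only [dotProduct, mulVec_diagonal]
    exact Finset.sum_congr rfl fun i _ => by ring
  · rw [hBx, dotProduct_mulVec_self_of_transpose_mul_eq_one hUtU]
    simp only [dotProduct, mulVec_diagonal]
    exact Finset.sum_congr rfl fun i _ => by ring

lemma IsHermitian.iInf_eigenvalues_mul_le (hB : B.IsHermitian) (x : n → ℝ) :
    (⨅ i, hB.eigenvalues i) * (x ⬝ᵥ x) ≤ x ⬝ᵥ B *ᵥ x := by
  obtain ⟨y, hx, hBx, -⟩ := hB.exists_eigencoords x
  rw [hx, hBx, Finset.mul_sum]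
  gcongr with i
  exact ciInf_le (Set.finite_range _).bddBelow i

lemma IsHermitian.le_iSup_eigenvalues_mul (hB : B.IsHermitian) (x : n → ℝ) :
    x ⬝ᵥ B *ᵥ x ≤ (⨆ i, hB.eigenvalues i) * (x ⬝ᵥ x) := by
  obtain ⟨y, hx, hBx, -⟩ := hB.exists_eigencoords x
  rw [hx, hBx, Finset.mul_sum]
  gcongr with i
  exact le_ciSup (Set.finite_range _).bddAbove i

lemma PosSemidef.iSup_eigenvalues_nonneg (hH : H.PosSemidef) : 0 ≤ ⨆ i, hH.1.eigenvalues i :=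
  Real.iSup_nonneg hH.eigenvalues_nonneg

lemma PosSemidef.mulVec_dotProduct_mulVec_le (hH : H.PosSemidef) (x : n → ℝ) :
    (H *ᵥ x) ⬝ᵥ (H *ᵥ x) ≤ (⨆ i, hH.1.eigenvalues i) * (x ⬝ᵥ H *ᵥ x) := by
  obtain ⟨y, -, hHx, hHHx⟩ := hH.1.exists_eigencoords x
  rw [hHx, hHHx, Finset.mul_sum]
  refine Finset.sum_le_sum fun i _ => ?_
  rw [sq, mul_assoc]
  have := hH.eigenvalues_nonneg i
  exact mul_le_mul_of_nonneg_right (le_ciSup (Set.finite_range _).bddAbove i) (by positivity)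

lemma PosSemidef.smul_add_mulVec_dotProduct_le (hH : H.PosSemidef) (hμ : 0 ≤ μ) (u : n → ℝ) :
    (μ • u + H *ᵥ u) ⬝ᵥ (μ • u + H *ᵥ u) ≤
      (μ + ⨆ i, hH.1.eigenvalues i) * (u ⬝ᵥ (μ • u + H *ᵥ u)) := by
  have hHu := hH.1.le_iSup_eigenvalues_mul u
  have hHuHu := hH.mulVec_dotProduct_mulVec_le u
  simp only [dotProduct_add, add_dotProduct, dotProduct_smul, smul_dotProduct, smul_eq_mul,
    dotProduct_comm (H *ᵥ u) u]
  nlinarith [mul_le_mul_of_nonneg_left hHu hμ]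

end Spectral

section SaddlePointEigen

/- `h₁` and `h₂` are the two block rows of `fromBlocks (-H) Aᵀ A Rd *ᵥ (u, v) = μ • (u, v)`. -/

variable {H : Matrix n n ℝ} {A : Matrix m n ℝ} {Rd : Matrix m m ℝ} {μ : ℝ}
  {u : n → ℝ} {v : m → ℝ}

lemma mul_dotProduct_self_eq_of_saddle_eigen (h₂ : A *ᵥ u + Rd *ᵥ v = μ • v) :
    μ * (v ⬝ᵥ v) = u ⬝ᵥ Aᵀ *ᵥ v + v ⬝ᵥ Rd *ᵥ v := by
  rw [← smul_eq_mul, ← dotProduct_smul, ← h₂, dotProduct_add, dotProduct_mulVec,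
    ← mulVec_transpose, dotProduct_comm]

variable [DecidableEq m]

lemma sq_le_of_saddle_eigen (hH : H.PosSemidef) (hRd : Rd.IsHermitian) (hμ : 0 ≤ μ)
    (hv : v ≠ 0) (h₁ : -H *ᵥ u + Aᵀ *ᵥ v = μ • u) (h₂ : A *ᵥ u + Rd *ᵥ v = μ • v) :
    μ ^ 2 ≤ (⨆ i, hRd.eigenvalues i) * μ +
      ⨆ i, (isHermitian_mul_conjTranspose_self A).eigenvalues i := by
  have hw : Aᵀ *ᵥ v = μ • u + H *ᵥ u := by rw [← h₁, neg_mulVec]; abel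
  have hv_pos : 0 < v ⬝ᵥ v := by
    simpa only [star_trivial] using dotProduct_star_self_pos_iff.mpr hv
  refine le_of_mul_le_mul_right ?_ hv_pos
  calc μ ^ 2 * (v ⬝ᵥ v) = μ * (u ⬝ᵥ Aᵀ *ᵥ v) + μ * (v ⬝ᵥ Rd *ᵥ v) := by
        rw [sq, mul_assoc, mul_dotProduct_self_eq_of_saddle_eigen h₂, mul_add]
    _ ≤ (Aᵀ *ᵥ v) ⬝ᵥ (Aᵀ *ᵥ v) + μ * ((⨆ i, hRd.eigenvalues i) * (v ⬝ᵥ v)) := by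
        gcongr
        · rw [hw]; exact hH.mul_dotProduct_smul_add_mulVec_le hμ u
        · exact hRd.le_iSup_eigenvalues_mul v
    _ ≤ (⨆ i, (isHermitian_mul_conjTranspose_self A).eigenvalues i) * (v ⬝ᵥ v) +
          μ * ((⨆ i, hRd.eigenvalues i) * (v ⬝ᵥ v)) := by
        rw [transpose_mulVec_dotProduct_self]
        gcongr
        exact (isHermitian_mul_conjTranspose_self A).le_iSup_eigenvalues_mul v
    _ = _ := by ring

lemma le_mul_of_saddle_eigen [DecidableEq n] (hH : H.PosSemidef) (hRd : Rd.IsHermitian)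
    (hμ : 0 ≤ μ) (hv : v ≠ 0) (h₁ : -H *ᵥ u + Aᵀ *ᵥ v = μ • u) (h₂ : A *ᵥ u + Rd *ᵥ v = μ • v) :
    ⨅ i, (isHermitian_mul_conjTranspose_self A).eigenvalues i ≤
      (μ + ⨆ i, hH.1.eigenvalues i) * (μ - ⨅ i, hRd.eigenvalues i) := by
  have hw : Aᵀ *ᵥ v = μ • u + H *ᵥ u := by rw [← h₁, neg_mulVec]; abel
  have hv_pos : 0 < v ⬝ᵥ v := by
    simpa only [star_trivial] using dotProduct_star_self_pos_iff.mpr hv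
  have hμL : 0 ≤ μ + ⨆ i, hH.1.eigenvalues i := add_nonneg hμ hH.iSup_eigenvalues_nonneg
  refine le_of_mul_le_mul_right ?_ hv_pos
  calc (⨅ i, (isHermitian_mul_conjTranspose_self A).eigenvalues i) * (v ⬝ᵥ v)
      ≤ (Aᵀ *ᵥ v) ⬝ᵥ (Aᵀ *ᵥ v) := by
        rw [transpose_mulVec_dotProduct_self]
        exact (isHermitian_mul_conjTranspose_self A).iInf_eigenvalues_mul_le v
    _ ≤ (μ + ⨆ i, hH.1.eigenvalues i) * (u ⬝ᵥ Aᵀ *ᵥ v) := by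
        rw [hw]; exact hH.smul_add_mulVec_dotProduct_le hμ u
    _ = (μ + ⨆ i, hH.1.eigenvalues i) * (μ * (v ⬝ᵥ v) - v ⬝ᵥ Rd *ᵥ v) := by
        rw [mul_dotProduct_self_eq_of_saddle_eigen h₂, add_sub_cancel_right]
    _ ≤ (μ + ⨆ i, hH.1.eigenvalues i) *
          (μ * (v ⬝ᵥ v) - (⨅ i, hRd.eigenvalues i) * (v ⬝ᵥ v)) := by
        gcongr
        exact hRd.iInf_eigenvalues_mul_le v
    _ = _ := by ring

end SaddlePointEigen

end Matrix

lemma le_half_add_sqrt_of_sq_le {μ b c : ℝ} (h : μ ^ 2 ≤ b * μ + c) :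
    μ ≤ 1 / 2 * (b + √(b ^ 2 + 4 * c)) := by
  suffices 2 * μ - b ≤ √(b ^ 2 + 4 * c) by linarith
  rcases le_or_gt (2 * μ - b) 0 with hle | hpos
  · exact hle.trans (Real.sqrt_nonneg _)
  · exact Real.le_sqrt_of_sq_le (by nlinarith)

lemma half_add_sqrt_le_of_le_mul {μ a b c : ℝ} (hμa : 0 < μ + a) (hc : 0 ≤ c)
    (h : c ≤ (μ + a) * (μ - b)) : 1 / 2 * ((b - a) + √((a + b) ^ 2 + 4 * c)) ≤ μ := by
  have hμb : 0 ≤ μ - b := nonneg_of_mul_nonneg_right (hc.trans h) hμa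
  have : √((a + b) ^ 2 + 4 * c) ≤ 2 * μ - b + a :=
    Real.sqrt_le_iff.mpr ⟨by linarith, by nlinarith⟩
  linarith

theorem stmt_16 {m n : ℕ} (A : Matrix (Fin m) (Fin n) ℝ)
    (H : Matrix (Fin n) (Fin n) ℝ) (hH : H.PosDef)
    (Rd : Matrix (Fin m) (Fin m) ℝ) (hRd : Rd.PosDef)
    (M : Matrix (Fin n ⊕ Fin m) (Fin n ⊕ Fin m) ℝ)
    (hMdef : M = Matrix.fromBlocks (-H) Aᵀ A Rd) :
    ∀ μ : ℝ, 0 < μ →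
      ∀ x : Fin n ⊕ Fin m → ℝ, x ≠ 0 → M.mulVec x = μ • x →
      ((1 / 2) * (((⨅ i, hRd.1.eigenvalues i) - ⨆ i, hH.1.eigenvalues i) +
        Real.sqrt (((⨆ i, hH.1.eigenvalues i) + ⨅ i, hRd.1.eigenvalues i) ^ 2 +
          4 * sigMin A ^ 2)) ≤ μ) ∧
      (μ ≤ (1 / 2) * ((⨆ i, hRd.1.eigenvalues i) +
        Real.sqrt ((⨆ i, hRd.1.eigenvalues i) ^ 2 + 4 * specNorm A ^ 2))) := by
  intro μ hμ x hx hMx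
  subst hMdef
  obtain ⟨h₁, h₂⟩ := fromBlocks_mulVec_eq_smul hMx
  have hv : x ∘ Sum.inr ≠ 0 := by
    intro hv
    have hu := hH.posSemidef.eq_zero_of_neg_mulVec_eq_smul hμ (by simpa [hv] using h₁)
    exact hx (funext (Sum.rec (congrFun hu) (congrFun hv)))
  have hAAt_nonneg := eigenvalues_self_mul_conjTranspose_nonneg A
  have hsigMin : sigMin A ^ 2 = ⨅ i, (isHermitian_mul_conjTranspose_self A).eigenvalues i :=
    Real.sq_sqrt (Real.iInf_nonneg hAAt_nonneg)
  have hspecNorm : specNorm A ^ 2 = ⨆ i, (isHermitian_mul_conjTranspose_self A).eigenvalues i :=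
    Real.sq_sqrt (Real.iSup_nonneg hAAt_nonneg)
  refine ⟨?_, ?_⟩
  · rw [hsigMin]
    exact half_add_sqrt_le_of_le_mul
      (add_pos_of_pos_of_nonneg hμ hH.posSemidef.iSup_eigenvalues_nonneg)
      (Real.iInf_nonneg hAAt_nonneg)
      (le_mul_of_saddle_eigen hH.posSemidef hRd.1 hμ.le hv h₁ h₂)
  · rw [hspecNorm]
    exact le_half_add_sqrt_of_sq_le (sq_le_of_saddle_eigen hH.posSemidef hRd.1 hμ.le hv h₁ h₂)
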